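/- arXiv:2006.14053 — 2 statements merged into one kernel-verified Lean document; each statement's English description precedes it below -/
import Mathlib

section
/- Let Sim(n) denote the group of all similarities of ℝⁿ, i.e., maps g(x) = u + λσ(x) with u ∈ ℝⁿ, λ > 0 and σ an orthogonal linear transformation. For every i ∈ {1,…,n}, the action of Sim(n) on the space 𝒦ⁿ_{i⁺} of all nonempty compact convex subsets of ℝⁿ of affine dimension at least i (equipped with the Hausdorff metric, with action (g,K) ↦ gK) is proper in the sense of Palais. -/
noncomputable abbrev Euc (n : ℕ) := EuclideanSpace ℝ (Fin n)

/-- The group `Sim(n)` of similarities of `ℝⁿ`, as a subgroup of the group of invertible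
affine transformations: those affine equivalences that scale all distances by a fixed positive
ratio (equivalently, maps `x ↦ u + λ σ x` with `λ > 0` and `σ` orthogonal). -/
noncomputable def Sim (n : ℕ) : Subgroup (Euc n ≃ᵃ[ℝ] Euc n) where
  carrier := {g | ∃ r : ℝ, 0 < r ∧ ∀ x y : Euc n, dist (g x) (g y) = r * dist x y}
  one_mem' := ⟨1, one_pos, fun x y => by simp⟩
  mul_mem' := by
    rintro a b ⟨r, hr, hra⟩ ⟨s, hs, hsb⟩
    refine ⟨r * s, mul_pos hr hs, fun x y => ?_⟩
    show dist (a (b x)) (a (b y)) = r * s * dist x y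
    rw [hra, hsb, mul_assoc]
  inv_mem' := by
    rintro a ⟨r, hr, hra⟩
    refine ⟨r⁻¹, inv_pos.mpr hr, fun x y => ?_⟩
    have h := hra (a⁻¹ x) (a⁻¹ y)
    have hx : a (a⁻¹ x) = x := a.apply_symm_apply x
    have hy : a (a⁻¹ y) = y := a.apply_symm_apply y
    rw [hx, hy] at h
    show dist (a⁻¹ x) (a⁻¹ y) = r⁻¹ * dist x y
    rw [h]
    field_simp

/-- The affine dimension of a subset of `ℝⁿ`. -/
noncomputable def affDim {n : ℕ} (s : Set (Euc n)) : ℕ :=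
  Module.finrank ℝ (affineSpan ℝ s).direction

lemma affDim_image {n : ℕ} (g : Euc n ≃ᵃ[ℝ] Euc n) (s : Set (Euc n)) :
    affDim (⇑g '' s) = affDim s := by
  unfold affDim
  have h1 : affineSpan ℝ (⇑g '' s) = AffineSubspace.map g.toAffineMap (affineSpan ℝ s) := by
    rw [AffineSubspace.map_span]
    rfl
  rw [h1, AffineSubspace.map_direction]
  have h2 : (g.toAffineMap).linear = (g.linear : Euc n →ₗ[ℝ] Euc n) := rfl
  rw [h2]
  exact g.linear.finrank_map_eq _

/-- The image of a nonempty compact convex set under an invertible affine map. -/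
noncomputable def affAct {n : ℕ} (g : Euc n ≃ᵃ[ℝ] Euc n) (K : ConvexBody (Euc n)) :
    ConvexBody (Euc n) :=
  ⟨⇑g '' (K : Set (Euc n)), K.convex.affine_image g.toAffineMap,
    K.isCompact.image g.toAffineMap.continuous_of_finiteDimensional,
    K.nonempty.image g⟩

/-- The space `𝒦ⁿ_{i⁺}` of nonempty compact convex subsets of `ℝⁿ` of affine dimension at
least `i`, with the Hausdorff metric. -/
abbrev Kplus (n i : ℕ) := {K : ConvexBody (Euc n) // i ≤ affDim (K : Set (Euc n))}

/-- The action of a similarity on `𝒦ⁿ_{i⁺}`. -/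
noncomputable def simAct {n i : ℕ} (g : Sim n) (K : Kplus n i) : Kplus n i :=
  ⟨affAct g.1 K.1, by
    have : (affAct g.1 K.1 : Set (Euc n)) = ⇑g.1 '' (K.1 : Set (Euc n)) := rfl
    rw [this, affDim_image]
    exact K.2⟩

/-- The natural topology on the group of invertible affine transformations of `ℝⁿ` (the
topology of pointwise convergence, which in finite dimension coincides with the natural
topology of `Aff(n) ≅ GL(n,ℝ) × ℝⁿ`); `Sim n` carries the subspace topology. -/
noncomputable instance affineEquivTopology (n : ℕ) : TopologicalSpace (Euc n ≃ᵃ[ℝ] Euc n) :=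
  TopologicalSpace.induced (fun g => (⇑g : Euc n → Euc n)) Pi.topologicalSpace

section Aux

open Metric Set

lemma sim_inducing (n : ℕ) :
    Topology.IsInducing (fun g : Euc n ≃ᵃ[ℝ] Euc n => (⇑g : Euc n → Euc n)) := ⟨rfl⟩

instance (n : ℕ) : T2Space (Euc n ≃ᵃ[ℝ] Euc n) :=
  Topology.IsEmbedding.t2Space ⟨sim_inducing n, AffineEquiv.coeFn_injective⟩

lemma diam_pos_of_one_le_affDim {n : ℕ} (K : ConvexBody (Euc n))
    (h : 1 ≤ affDim (K : Set (Euc n))) : 0 < Metric.diam (K : Set (Euc n)) := by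
  by_contra hd
  push_neg at hd
  have hsub : (K : Set (Euc n)).Subsingleton := by
    intro x hx y hy
    by_contra hxy
    have h1 : 0 < dist x y := dist_pos.2 hxy
    have h2 : dist x y ≤ Metric.diam (K : Set (Euc n)) :=
      Metric.dist_le_diam_of_mem K.isCompact.isBounded hx hy
    linarith
  obtain ⟨p, hp⟩ := K.nonempty
  have hK : (K : Set (Euc n)) = {p} := hsub.eq_singleton_of_mem hp
  have : affDim (K : Set (Euc n)) = 0 := by
    unfold affDim
    rw [hK, direction_affineSpan, vectorSpan_singleton]
    exact finrank_bot ℝ _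
  omega

lemma diam_le_of_hausdorffDist_lt {n : ℕ} {s t : Set (Euc n)}
    (hs : Bornology.IsBounded s) (ht : Bornology.IsBounded t)
    (hsne : s.Nonempty) (htne : t.Nonempty) {h : ℝ}
    (hh : Metric.hausdorffDist s t < h) :
    Metric.diam s ≤ Metric.diam t + 2 * h := by
  have fin : EMetric.hausdorffEdist s t ≠ ⊤ :=
    Metric.hausdorffEdist_ne_top_of_nonempty_of_bounded hsne htne hs ht
  have hh0 : 0 < h := lt_of_le_of_lt Metric.hausdorffDist_nonneg hh
  apply Metric.diam_le_of_forall_dist_le (by positivity)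
  intro x hx y hy
  obtain ⟨x', hx', hxx'⟩ := Metric.exists_dist_lt_of_hausdorffDist_lt hx hh fin
  obtain ⟨y', hy', hyy'⟩ := Metric.exists_dist_lt_of_hausdorffDist_lt hy hh fin
  have h4 : dist x y ≤ dist x x' + dist x' y' + dist y' y := dist_triangle4 x x' y' y
  have h5 : dist x' y' ≤ Metric.diam t := Metric.dist_le_diam_of_mem ht hx' hy'
  have h6 : dist y' y = dist y y' := dist_comm _ _
  linarith

lemma diam_image_sim {n : ℕ} {r : ℝ} (hr : 0 < r) (g : Euc n → Euc n)
    (hg : ∀ x y, dist (g x) (g y) = r * dist x y) (s : Set (Euc n))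
    (hs : Bornology.IsBounded s) :
    Metric.diam (g '' s) = r * Metric.diam s := by
  have hbd : Bornology.IsBounded (g '' s) := by
    rw [Metric.isBounded_iff]
    refine ⟨r * Metric.diam s, ?_⟩
    rintro _ ⟨x, hx, rfl⟩ _ ⟨y, hy, rfl⟩
    rw [hg]
    exact mul_le_mul_of_nonneg_left (Metric.dist_le_diam_of_mem hs hx hy) hr.le
  apply le_antisymm
  · apply Metric.diam_le_of_forall_dist_le (by positivity)
    rintro _ ⟨x, hx, rfl⟩ _ ⟨y, hy, rfl⟩
    rw [hg]
    exact mul_le_mul_of_nonneg_left (Metric.dist_le_diam_of_mem hs hx hy) hr.le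
  · have key : Metric.diam s ≤ r⁻¹ * Metric.diam (g '' s) := by
      apply Metric.diam_le_of_forall_dist_le (by positivity)
      intro x hx y hy
      have h1 : dist x y = r⁻¹ * dist (g x) (g y) := by
        rw [hg]; field_simp
      rw [h1]
      exact mul_le_mul_of_nonneg_left
        (Metric.dist_le_diam_of_mem hbd (Set.mem_image_of_mem g hx)
          (Set.mem_image_of_mem g hy)) (by positivity)
    calc r * Metric.diam s ≤ r * (r⁻¹ * Metric.diam (g '' s)) :=
          mul_le_mul_of_nonneg_left key hr.le
      _ = Metric.diam (g '' s) := by field_simp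

/-- The key compactness fact: similarities with ratio in `[a,b]` (with `a > 0`) and
bounded translation part form a compact subset of `Sim n`. -/
lemma isCompact_sim_set (n : ℕ) (hn : 0 < n) (a b c : ℝ) (ha : 0 < a) :
    IsCompact {g : Sim n |
      (∃ r ∈ Set.Icc a b, ∀ x y : Euc n, dist (g.1 x) (g.1 y) = r * dist x y) ∧
      ‖g.1 0‖ ≤ c} := by
  set x₀ : Euc n := EuclideanSpace.single ⟨0, hn⟩ (1 : ℝ) with hx₀def
  have hx₀ : dist x₀ (0 : Euc n) = 1 := by
    rw [dist_zero_right, hx₀def, EuclideanSpace.norm_single]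
    norm_num
  set e : Sim n → (Euc n → Euc n) := fun g => ⇑g.1 with he
  have hind : Topology.IsInducing e := (sim_inducing n).comp Topology.IsInducing.subtypeVal
  rw [hind.isCompact_iff]
  set A : Set (Euc n → Euc n) :=
    {f | dist (f x₀) (f 0) ∈ Set.Icc a b ∧
      (∀ x y, dist (f x) (f y) = dist (f x₀) (f 0) * dist x y) ∧ ‖f 0‖ ≤ c} with hA
  have himg : e '' {g : Sim n |
      (∃ r ∈ Set.Icc a b, ∀ x y : Euc n, dist (g.1 x) (g.1 y) = r * dist x y) ∧
      ‖g.1 0‖ ≤ c} = A := by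
    apply Set.Subset.antisymm
    · rintro _ ⟨g, ⟨⟨r, hr, hrg⟩, hgc⟩, rfl⟩
      have : dist (g.1 x₀) (g.1 0) = r := by rw [hrg, hx₀, mul_one]
      refine ⟨by rwa [he, this], fun x y => by rw [he, hrg, this], hgc⟩
    · rintro f ⟨hfr, hf, hfc⟩
      set r : ℝ := dist (f x₀) (f 0) with hrdef
      have hr0 : 0 < r := lt_of_lt_of_le ha hfr.1
      set φ : Euc n → Euc n := fun x => r⁻¹ • f x with hφ
      have hiso : Isometry φ := by
        apply Isometry.of_dist_eq
        intro x y
        rw [hφ]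
        simp only
        rw [dist_smul₀, hf, norm_inv, Real.norm_eq_abs, abs_of_pos hr0]
        field_simp
      set Aff : Euc n →ᵃⁱ[ℝ] Euc n := hiso.affineIsometryOfStrictConvexSpace with hAff
      have hAfff : ∀ x, Aff x = φ x := fun x => rfl
      set L : Euc n →ₗᵢ[ℝ] Euc n := Aff.linearIsometry with hL
      set Leq : Euc n ≃ₗᵢ[ℝ] Euc n := L.toLinearIsometryEquiv rfl with hLeq
      have hLeqL : ∀ x, Leq x = L x := fun x => rfl
      set ℓ : Euc n ≃ₗ[ℝ] Euc n :=
        Leq.toLinearEquiv.trans (LinearEquiv.smulOfNeZero ℝ (Euc n) r hr0.ne') with hℓ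
      set g₀ : Euc n ≃ᵃ[ℝ] Euc n :=
        ℓ.toAffineEquiv.trans (AffineEquiv.constVAdd ℝ (Euc n) (f 0)) with hg₀
      have hLx : ∀ x, L x = φ x - φ 0 := by
        intro x
        have := Aff.map_vsub x 0
        rw [vsub_eq_sub, sub_zero] at this
        rw [hL, this, hAfff, hAfff, vsub_eq_sub]
      have hcoe : ⇑g₀ = f := by
        funext x
        have hsmul : ∀ v : Euc n, (LinearEquiv.smulOfNeZero ℝ (Euc n) r hr0.ne') v = r • v :=
          fun v => rfl
        have h1 : g₀ x = f 0 + r • Leq x := by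
          simp only [hg₀, AffineEquiv.trans_apply, LinearEquiv.coe_toAffineEquiv, hℓ,
            AffineEquiv.constVAdd_apply, vadd_eq_add, LinearEquiv.trans_apply, hsmul]
          rfl
        rw [h1, hLeqL, hLx, hφ]
        simp only [smul_sub, smul_smul, mul_inv_cancel₀ hr0.ne', one_smul]
        abel
      have hgSim : g₀ ∈ Sim n := by
        refine ⟨r, hr0, fun x y => ?_⟩
        show dist (g₀ x) (g₀ y) = r * dist x y
        rw [hcoe]; exact hf x y
      refine ⟨⟨g₀, hgSim⟩, ⟨⟨r, hfr, fun x y => ?_⟩, ?_⟩, ?_⟩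
      · show dist (g₀ x) (g₀ y) = r * dist x y
        rw [hcoe]; exact hf x y
      · show ‖g₀ 0‖ ≤ c
        rw [hcoe]; exact hfc
      · rw [he]; exact hcoe
  rw [himg]
  have hclosed : IsClosed A := by
    have h1 : IsClosed {f : Euc n → Euc n | dist (f x₀) (f 0) ∈ Set.Icc a b} :=
      IsClosed.preimage ((continuous_apply x₀).dist (continuous_apply 0)) isClosed_Icc
    have h2 : IsClosed {f : Euc n → Euc n |
        ∀ x y, dist (f x) (f y) = dist (f x₀) (f 0) * dist x y} := by
      have : {f : Euc n → Euc n | ∀ x y, dist (f x) (f y) = dist (f x₀) (f 0) * dist x y}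
          = ⋂ (x : Euc n), ⋂ (y : Euc n),
            {f | dist (f x) (f y) = dist (f x₀) (f 0) * dist x y} := by
        ext f; simp
      rw [this]
      refine isClosed_iInter fun x => isClosed_iInter fun y => ?_
      exact isClosed_eq ((continuous_apply x).dist (continuous_apply y))
        (((continuous_apply x₀).dist (continuous_apply 0)).mul continuous_const)
    have h3 : IsClosed {f : Euc n → Euc n | ‖f 0‖ ≤ c} :=
      IsClosed.preimage ((continuous_apply (0 : Euc n)).norm) isClosed_Iic
    have : A = {f : Euc n → Euc n | dist (f x₀) (f 0) ∈ Set.Icc a b} ∩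
        ({f | ∀ x y, dist (f x) (f y) = dist (f x₀) (f 0) * dist x y} ∩
          {f | ‖f 0‖ ≤ c}) := by
      ext f; simp [hA, and_assoc]
    rw [this]
    exact h1.inter (h2.inter h3)
  have hsubset : A ⊆ Set.pi Set.univ (fun x : Euc n => Metric.closedBall (0 : Euc n) (c + b * ‖x‖)) := by
    rintro f ⟨hfr, hf, hfc⟩ x _
    rw [Metric.mem_closedBall, dist_zero_right]
    have h1 : ‖f x‖ ≤ ‖f x - f 0‖ + ‖f 0‖ := by simpa using norm_add_le (f x - f 0) (f 0)
    have h2 : ‖f x - f 0‖ = dist (f x) (f 0) := (dist_eq_norm _ _).symm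
    have h3 : dist (f x) (f 0) = dist (f x₀) (f 0) * dist x 0 := hf x 0
    have h4 : dist (f x₀) (f 0) * dist x 0 ≤ b * ‖x‖ := by
      rw [dist_zero_right]
      exact mul_le_mul_of_nonneg_right hfr.2 (norm_nonneg x)
    linarith
  exact IsCompact.of_isClosed_subset
    (isCompact_univ_pi fun x => isCompact_closedBall _ _) hclosed hsubset

end Aux

/-- For every `i ∈ {1,…,n}`, the action of the group `Sim(n)` of
similarities of `ℝⁿ` on the space `𝒦ⁿ_{i⁺}` of nonempty compact convex subsets of `ℝⁿ` of
affine dimension at least `i` (with the Hausdorff metric) is proper in the sense of Palais: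
there is an open cover of `𝒦ⁿ_{i⁺}` by small sets, i.e. sets `U` such that every point has a
neighborhood `V` for which `{g ∈ Sim(n) | gU ∩ V ≠ ∅}` has compact closure in `Sim(n)`. -/
theorem statement16 (n i : ℕ) (hi : 1 ≤ i) (hin : i ≤ n) :
    ∃ 𝒰 : Set (Set (Kplus n i)), (∀ U ∈ 𝒰, IsOpen U) ∧ ⋃₀ 𝒰 = Set.univ ∧
      ∀ U ∈ 𝒰, ∀ x : Kplus n i, ∃ V ∈ nhds x,
        IsCompact (closure {g : Sim n | ∃ s ∈ U, simAct g s ∈ V}) := by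
  have hn : 0 < n := lt_of_lt_of_le hi hin
  refine ⟨{U | ∃ K : Kplus n i, U = Metric.ball K (Metric.diam (K.1 : Set (Euc n)) / 4)},
    ?_, ?_, ?_⟩
  · rintro U ⟨K, rfl⟩; exact Metric.isOpen_ball
  · apply Set.eq_univ_of_forall
    intro K
    have hD : 0 < Metric.diam (K.1 : Set (Euc n)) :=
      diam_pos_of_one_le_affDim _ (le_trans hi K.2)
    exact ⟨_, ⟨K, rfl⟩, Metric.mem_ball_self (by positivity)⟩
  · rintro U ⟨K₀, rfl⟩ L₀
    have hD₀ : 0 < Metric.diam (K₀.1 : Set (Euc n)) :=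
      diam_pos_of_one_le_affDim _ (le_trans hi K₀.2)
    have hD₁ : 0 < Metric.diam (L₀.1 : Set (Euc n)) :=
      diam_pos_of_one_le_affDim _ (le_trans hi L₀.2)
    set D₀ := Metric.diam (K₀.1 : Set (Euc n)) with hD₀def
    set D₁ := Metric.diam (L₀.1 : Set (Euc n)) with hD₁def
    obtain ⟨R₀, hR₀⟩ := K₀.1.isCompact.isBounded.subset_closedBall 0
    obtain ⟨R₁, hR₁⟩ := L₀.1.isCompact.isBounded.subset_closedBall 0
    set a := D₁ / (3 * D₀) with hadef
    set b := 3 * D₁ / D₀ with hbdef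
    set c := b * (R₀ + D₀ / 4) + (R₁ + D₁ / 4) with hcdef
    refine ⟨Metric.ball L₀ (D₁ / 4), Metric.ball_mem_nhds _ (by positivity), ?_⟩
    apply IsCompact.closure_of_subset (isCompact_sim_set n hn a b c (by positivity))
    rintro g ⟨s, hs, hgs⟩
    obtain ⟨r, hr0, hrg⟩ := g.2
    have hsK : Metric.hausdorffDist (s.1 : Set (Euc n)) (K₀.1 : Set (Euc n)) < D₀ / 4 := by
      have h := Metric.mem_ball.1 hs
      rwa [Subtype.dist_eq, ← ConvexBody.hausdorffDist_coe] at h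
    have hcoe : ((simAct g s).1 : Set (Euc n)) = ⇑g.1 '' (s.1 : Set (Euc n)) := rfl
    have hgL : Metric.hausdorffDist (⇑g.1 '' (s.1 : Set (Euc n))) (L₀.1 : Set (Euc n))
        < D₁ / 4 := by
      have h := Metric.mem_ball.1 hgs
      rwa [Subtype.dist_eq, ← ConvexBody.hausdorffDist_coe, hcoe] at h
    have hbs : Bornology.IsBounded (s.1 : Set (Euc n)) := s.1.isCompact.isBounded
    have hb0 : Bornology.IsBounded (K₀.1 : Set (Euc n)) := K₀.1.isCompact.isBounded
    have hb1 : Bornology.IsBounded (L₀.1 : Set (Euc n)) := L₀.1.isCompact.isBounded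
    have hbimg : Bornology.IsBounded (⇑g.1 '' (s.1 : Set (Euc n))) := by
      rw [← hcoe]; exact (simAct g s).1.isCompact.isBounded
    have himgne : (⇑g.1 '' (s.1 : Set (Euc n))).Nonempty := by
      rw [← hcoe]; exact (simAct g s).1.nonempty
    have hd1 : D₀ ≤ Metric.diam (s.1 : Set (Euc n)) + 2 * (D₀ / 4) :=
      diam_le_of_hausdorffDist_lt hb0 hbs K₀.1.nonempty s.1.nonempty
        (by rwa [Metric.hausdorffDist_comm] at hsK)
    have hd2 : Metric.diam (s.1 : Set (Euc n)) ≤ D₀ + 2 * (D₀ / 4) :=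
      diam_le_of_hausdorffDist_lt hbs hb0 s.1.nonempty K₀.1.nonempty hsK
    have himg : Metric.diam (⇑g.1 '' (s.1 : Set (Euc n)))
        = r * Metric.diam (s.1 : Set (Euc n)) := diam_image_sim hr0 _ hrg _ hbs
    have hd3 : D₁ ≤ r * Metric.diam (s.1 : Set (Euc n)) + 2 * (D₁ / 4) := by
      rw [← himg]
      exact diam_le_of_hausdorffDist_lt hb1 hbimg L₀.1.nonempty himgne
        (by rwa [Metric.hausdorffDist_comm] at hgL)
    have hd4 : r * Metric.diam (s.1 : Set (Euc n)) ≤ D₁ + 2 * (D₁ / 4) := by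
      rw [← himg]
      exact diam_le_of_hausdorffDist_lt hbimg hb1 himgne L₀.1.nonempty hgL
    set ds := Metric.diam (s.1 : Set (Euc n)) with hdsdef
    have hds0 : 0 ≤ ds := Metric.diam_nonneg
    have hra : a ≤ r := by
      rw [hadef, div_le_iff₀ (by positivity)]
      nlinarith [mul_le_mul_of_nonneg_left hd2 hr0.le]
    have hrb : r ≤ b := by
      rw [hbdef, le_div_iff₀ hD₀]
      nlinarith
    obtain ⟨p, hp⟩ := s.1.nonempty
    have fin1 : EMetric.hausdorffEdist (s.1 : Set (Euc n)) (K₀.1 : Set (Euc n)) ≠ ⊤ :=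
      ConvexBody.hausdorffEdist_ne_top
    obtain ⟨q, hq, hpq⟩ := Metric.exists_dist_lt_of_hausdorffDist_lt hp hsK fin1
    have hqn : ‖q‖ ≤ R₀ := by
      have h := hR₀ hq; rwa [Metric.mem_closedBall, dist_zero_right] at h
    have hpn : ‖p‖ ≤ R₀ + D₀ / 4 := by
      have h := dist_triangle p q 0
      simp only [dist_zero_right] at h
      linarith
    have hgp : (⇑g.1 p) ∈ ⇑g.1 '' (s.1 : Set (Euc n)) :=
      Set.mem_image_of_mem _ hp
    have fin2 : EMetric.hausdorffEdist (⇑g.1 '' (s.1 : Set (Euc n)))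
        (L₀.1 : Set (Euc n)) ≠ ⊤ := by
      rw [← hcoe]; exact ConvexBody.hausdorffEdist_ne_top
    obtain ⟨q', hq', hpq'⟩ := Metric.exists_dist_lt_of_hausdorffDist_lt hgp hgL fin2
    have hq'n : ‖q'‖ ≤ R₁ := by
      have h := hR₁ hq'; rwa [Metric.mem_closedBall, dist_zero_right] at h
    have hgpn : ‖g.1 p‖ ≤ R₁ + D₁ / 4 := by
      have h := dist_triangle (g.1 p) q' 0
      simp only [dist_zero_right] at h
      linarith
    have hg0 : ‖g.1 0‖ ≤ c := by
      have h1 : dist (g.1 0) (g.1 p) = r * ‖p‖ := by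
        rw [hrg, dist_zero_left]
      have h2 : ‖g.1 0‖ ≤ dist (g.1 0) (g.1 p) + ‖g.1 p‖ := by
        have h := dist_triangle (g.1 0) (g.1 p) 0
        simp only [dist_zero_right] at h
        exact h
      have h3 : r * ‖p‖ ≤ b * (R₀ + D₀ / 4) := by
        have hb0' : 0 < b := lt_of_lt_of_le (lt_of_lt_of_le (by positivity) hra) hrb
        nlinarith [norm_nonneg p]
      rw [hcdef]; linarith
    exact ⟨⟨r, ⟨hra, hrb⟩, hrg⟩, hg0⟩
end

section
/- Let Sim(n) denote the group of all similarities of ℝⁿ. For every i with 1 ≤ i ≤ n, the pair (𝒦ⁿ_{i⁺}, ℝⁿ) has the Sim(n)-finite extension property: for all finite sets {K_1,…,K_m} ⊆ 𝒦ⁿ_{i⁺} and {y_1,…,y_m} ⊆ ℝⁿ such that for every j the Sim(n)-stabilizer of K_j is contained in the Sim(n)-stabilizer of y_j, and such that the Sim(n)-orbits of K_j and K_k are disjoint whenever j ≠ k, there exists a continuous Sim(n)-equivariant map ψ : 𝒦ⁿ_{i⁺} → ℝⁿ with ψ(K_j) = y_j for every j ∈ {1,…,m}. -/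
/-!
The Chebyshev center `c K` of a compact set (the center of its smallest enclosing ball) is unique
by the parallelogram law; it and the Chebyshev radius `R K`, positive unless `K` is a point, are
continuous and commute with similarities. Hence `K ↦ (K - c K) / R K` turns similarities into
orthogonal maps, and `ψ K = c K + R K • Φ ((K - c K) / R K)` is `Sim(n)`-equivariant whenever `Φ`
is `O(n)`-equivariant.

`Φ` is built by averaging over Haar measure on the compact group `O(n)`: for a target `N` and a
small `a > 0`, `X ↦ ∫ max (a - d(σ⁻¹ X, N)) 0 • σ p dσ` is continuous, equivariant, and vanishes at
the other targets. At `X = N`, on the vectors `p` fixed by the stabilizer of `N`, it is within half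
of a positive multiple of the identity, because by compactness every `σ` that nearly fixes `N`
nearly fixes those vectors; so it maps onto them, and the prescribed value is reached.
-/

open Metric Set Filter Topology TopologicalSpace MeasureTheory

namespace Unitary

variable {E : Type*} [NormedAddCommGroup E] [InnerProductSpace ℝ E] [CompleteSpace E]

theorem norm_smul_eq (σ : unitary (E →L[ℝ] E)) (x : E) : ‖σ • x‖ = ‖x‖ :=
  Unitary.norm_map σ x

theorem norm_le_one (σ : unitary (E →L[ℝ] E)) : ‖(σ : E →L[ℝ] E)‖ ≤ 1 :=
  ContinuousLinearMap.opNorm_le_bound _ zero_le_one fun x => by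
    rw [Unitary.norm_map, one_mul]

instance [FiniteDimensional ℝ E] : CompactSpace (unitary (E →L[ℝ] E)) :=
  isCompact_iff_compactSpace.1 <| (isCompact_closedBall (0 : E →L[ℝ] E) 1).of_isClosed_subset
    isClosed_unitary fun σ hσ => mem_closedBall_zero_iff.2 (norm_le_one ⟨σ, hσ⟩)

end Unitary

namespace AffineEquiv

section Ring

variable {k V : Type*} [Ring k] [AddCommGroup V] [Module k V]

theorem map_add_eq_add_linear (g : V ≃ᵃ[k] V) (x v : V) : g (x + v) = g x + g.linear v := by
  rw [add_comm x v, ← vadd_eq_add, map_vadd, vadd_eq_add, add_comm]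

theorem map_sub_map_eq_linear (g : V ≃ᵃ[k] V) (x y : V) : g x - g y = g.linear (x - y) := by
  rw [sub_eq_iff_eq_add', ← map_add_eq_add_linear, add_sub_cancel]

end Ring

variable {E : Type*} [NormedAddCommGroup E] [InnerProductSpace ℝ E] [CompleteSpace E]

noncomputable def rotationPart (g : E ≃ᵃ[ℝ] E) {r : ℝ} (hr : 0 < r)
    (hg : ∀ x y, dist (g x) (g y) = r * dist x y) : unitary (E →L[ℝ] E) :=
  Unitary.linearIsometryEquiv.symm
    { g.linear.trans (LinearEquiv.smulOfNeZero ℝ E r⁻¹ (inv_ne_zero hr.ne')) with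
      norm_map' := fun v => by
        change ‖r⁻¹ • g.linear v‖ = ‖v‖
        rw [norm_smul, Real.norm_of_nonneg (inv_nonneg.2 hr.le), ← sub_zero v,
          ← map_sub_map_eq_linear, ← dist_eq_norm, ← dist_eq_norm, hg,
          inv_mul_cancel_left₀ hr.ne'] }

theorem rotationPart_smul (g : E ≃ᵃ[ℝ] E) {r : ℝ} (hr : 0 < r)
    (hg : ∀ x y, dist (g x) (g y) = r * dist x y) (v : E) :
    rotationPart g hr hg • v = r⁻¹ • g.linear v :=
  rfl

noncomputable def similarity (σ : unitary (E →L[ℝ] E)) (c c' : E) {t : ℝ} (ht : t ≠ 0) :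
    E ≃ᵃ[ℝ] E :=
  ((constVAdd ℝ E (-c)).trans ((Unitary.linearIsometryEquiv σ).toLinearEquiv.trans
    (LinearEquiv.smulOfNeZero ℝ E t ht)).toAffineEquiv).trans (constVAdd ℝ E c')

theorem similarity_apply (σ : unitary (E →L[ℝ] E)) (c c' : E) {t : ℝ} (ht : t ≠ 0) (x : E) :
    similarity σ c c' ht x = c' + t • σ • (x - c) := by
  rw [sub_eq_neg_add]
  rfl

theorem exists_dist_similarity (σ : unitary (E →L[ℝ] E)) (c c' : E) {t : ℝ} (ht : t ≠ 0) :
    ∃ r, 0 < r ∧ ∀ x y, dist (similarity σ c c' ht x) (similarity σ c c' ht y) = r * dist x y :=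
  ⟨|t|, abs_pos.2 ht, fun x y => by
    rw [similarity_apply, similarity_apply, dist_add_left, dist_smul₀, Real.norm_eq_abs,
      dist_eq_norm, ← smul_sub, Unitary.norm_smul_eq, sub_sub_sub_cancel_right, dist_eq_norm]⟩

end AffineEquiv

namespace ConvexBody

variable {V : Type*} [NormedAddCommGroup V] [NormedSpace ℝ V]

def toNonemptyCompacts (K : ConvexBody V) : NonemptyCompacts V :=
  ⟨⟨K, K.isCompact⟩, K.nonempty⟩

theorem isometry_toNonemptyCompacts : Isometry (toNonemptyCompacts : ConvexBody V → _) :=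
  Isometry.of_dist_eq fun K L => by
    rw [Metric.NonemptyCompacts.dist_eq, ← hausdorffDist_coe]
    rfl

end ConvexBody

theorem Set.nontrivial_of_one_le_finrank_direction {V P : Type*} [AddCommGroup V] [Module ℝ V]
    [AddTorsor V P] {s : Set P} (h : 1 ≤ Module.finrank ℝ (affineSpan ℝ s).direction) :
    s.Nontrivial := by
  refine Set.not_subsingleton_iff.1 fun hs => ?_
  rw [direction_affineSpan, vectorSpan_of_subsingleton ℝ hs, finrank_bot] at h
  exact Nat.not_succ_le_zero 0 h

namespace TopologicalSpace.NonemptyCompacts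

section Metric

variable {α β : Type*} [MetricSpace α] [MetricSpace β]

theorem exists_dist_le_dist {K L : NonemptyCompacts α} {x : α} (hx : x ∈ K) :
    ∃ y ∈ L, dist x y ≤ dist K L := by
  obtain ⟨y, hy, hxy⟩ := L.isCompact.exists_infDist_eq_dist L.nonempty x
  exact ⟨y, hy, hxy ▸ infDist_le_hausdorffDist_of_mem hx (edist_ne_top K L)⟩

theorem dist_map_map_le {f g : α → β} (hf : Continuous f) (hg : Continuous g)
    (K : NonemptyCompacts α) {C : ℝ} (h : ∀ x ∈ K, dist (f x) (g x) ≤ C) :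
    dist (K.map f hf) (K.map g hg) ≤ C := by
  obtain ⟨x₀, hx₀⟩ := K.nonempty
  rw [Metric.NonemptyCompacts.dist_eq, coe_map, coe_map]
  refine hausdorffDist_le_of_mem_dist (dist_nonneg.trans (h x₀ hx₀)) ?_ ?_
  · rintro _ ⟨x, hx, rfl⟩
    exact ⟨g x, mem_image_of_mem g hx, h x hx⟩
  · rintro _ ⟨x, hx, rfl⟩
    exact ⟨f x, mem_image_of_mem f hx, dist_comm (g x) (f x) ▸ h x hx⟩

theorem dist_map_le_mul {f : α → β} {C : NNReal} (hf : LipschitzWith C f)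
    (K L : NonemptyCompacts α) :
    dist (K.map f hf.continuous) (L.map f hf.continuous) ≤ C * dist K L := by
  have key : ∀ {K L : NonemptyCompacts α}, ∀ x ∈ K,
      ∃ y ∈ L.map f hf.continuous, dist (f x) y ≤ C * dist K L := fun {K L} x hx => by
    obtain ⟨y, hy, hxy⟩ := exists_dist_le_dist (L := L) hx
    exact ⟨f y, mem_image_of_mem f hy,
      (hf.dist_le_mul x y).trans (mul_le_mul_of_nonneg_left hxy C.2)⟩
  rw [Metric.NonemptyCompacts.dist_eq, coe_map, coe_map]
  refine hausdorffDist_le_of_mem_dist (by positivity) ?_ ?_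
  · rintro _ ⟨x, hx, rfl⟩
    exact key x hx
  · rintro _ ⟨x, hx, rfl⟩
    exact dist_comm K L ▸ key x hx

theorem dist_le_dist_singleton {K : NonemptyCompacts α} {a : α} (ha : a ∈ K) (x : α) :
    dist x a ≤ dist {x} K := by
  obtain ⟨y, rfl, hy⟩ := exists_dist_le_dist (L := {x}) ha
  exact (dist_comm y a).le.trans (hy.trans (dist_comm K {y}).le)

theorem exists_dist_singleton_eq (K : NonemptyCompacts α) (x : α) :
    ∃ a ∈ K, dist {x} K = dist x a := by
  obtain ⟨a, ha, hmax⟩ :=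
    K.isCompact.exists_isMaxOn K.nonempty (continuous_const.dist continuous_id).continuousOn
  refine ⟨a, ha, le_antisymm ?_ (dist_le_dist_singleton ha x)⟩
  rw [Metric.NonemptyCompacts.dist_eq]
  refine hausdorffDist_le_of_mem_dist dist_nonneg ?_ ?_
  · rintro _ rfl
    exact ⟨a, ha, le_rfl⟩
  · intro b hb
    exact ⟨x, rfl, dist_comm x b ▸ hmax hb⟩

theorem dist_singleton_of_image {g : α → β} {r : ℝ} (hr : 0 ≤ r)
    (hg : ∀ x y, dist (g x) (g y) = r * dist x y) {K : NonemptyCompacts α}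
    {L : NonemptyCompacts β} (hL : (L : Set β) = g '' K) (x : α) :
    dist {g x} L = r * dist {x} K := by
  obtain ⟨a, ha, hxa⟩ := exists_dist_singleton_eq K x
  obtain ⟨b, hb, hxb⟩ := exists_dist_singleton_eq L (g x)
  obtain ⟨b, hb', rfl⟩ : b ∈ g '' K := hL ▸ hb
  refine le_antisymm ?_ ?_
  · rw [hxb, hg]
    exact mul_le_mul_of_nonneg_left (dist_le_dist_singleton hb' x) hr
  · rw [hxa, ← hg]
    exact dist_le_dist_singleton (hL ▸ mem_image_of_mem g ha : g a ∈ (L : Set β)) (g x)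

section Proper

variable [ProperSpace α]

theorem exists_forall_dist_singleton_le (K : NonemptyCompacts α) :
    ∃ c, ∀ y, dist {c} K ≤ dist {y} K := by
  obtain ⟨a, ha⟩ := K.nonempty
  have : Nonempty α := ⟨a⟩
  refine (isometry_singleton.continuous.dist continuous_const).exists_forall_le ?_
  exact tendsto_atTop_mono (fun y => dist_comm a y ▸ dist_le_dist_singleton ha y)
    (tendsto_dist_left_cocompact_atTop a)

/-- `dist {c} K` is the farthest distance from `c` to a point of `K`; in Euclidean space its
minimizer is unique (`eq_chebyshevCenter_of_forall_le`). -/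
noncomputable def chebyshevCenter (K : NonemptyCompacts α) : α :=
  (exists_forall_dist_singleton_le K).choose

noncomputable def chebyshevRadius (K : NonemptyCompacts α) : ℝ :=
  dist {chebyshevCenter K} K

theorem chebyshevRadius_le (K : NonemptyCompacts α) (y : α) :
    chebyshevRadius K ≤ dist {y} K :=
  (exists_forall_dist_singleton_le K).choose_spec y

theorem chebyshevRadius_nonneg (K : NonemptyCompacts α) : 0 ≤ chebyshevRadius K :=
  dist_nonneg

theorem chebyshevRadius_le_add_dist (K L : NonemptyCompacts α) :
    chebyshevRadius K ≤ chebyshevRadius L + dist K L :=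
  (chebyshevRadius_le K (chebyshevCenter L)).trans <| by
    rw [dist_comm K L]; exact dist_triangle _ _ _

theorem lipschitzWith_chebyshevRadius :
    LipschitzWith 1 (chebyshevRadius : NonemptyCompacts α → ℝ) :=
  LipschitzWith.of_le_add chebyshevRadius_le_add_dist

theorem chebyshevRadius_ne_zero {K : NonemptyCompacts α} (hK : (K : Set α).Nontrivial) :
    chebyshevRadius K ≠ 0 := by
  obtain ⟨x, hx, y, hy, hxy⟩ := hK
  intro h0
  have hc : ∀ z ∈ K, z = chebyshevCenter K := fun z hz =>
    (dist_le_zero.1 (h0 ▸ dist_le_dist_singleton hz (chebyshevCenter K))).symm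
  exact hxy ((hc x hx).trans (hc y hy).symm)

end Proper

end Metric

section Chebyshev

variable {E : Type*} [NormedAddCommGroup E] [InnerProductSpace ℝ E] [ProperSpace E]

/-- Apollonius' theorem at the midpoint of `x` and `y`; this is where the Euclidean structure
enters. -/
theorem sq_dist_le_of_dist_singleton_le {K : NonemptyCompacts E} {x y : E} {r : ℝ}
    (hx : dist {x} K ≤ r) (hy : dist {y} K ≤ r) :
    dist x y ^ 2 ≤ 4 * (r ^ 2 - chebyshevRadius K ^ 2) := by
  obtain ⟨a, ha, hma⟩ := exists_dist_singleton_eq K (midpoint ℝ x y)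
  have hxa := (dist_le_dist_singleton ha x).trans hx
  have hya := (dist_le_dist_singleton ha y).trans hy
  have hRm : chebyshevRadius K ≤ dist (midpoint ℝ x y) a :=
    hma ▸ chebyshevRadius_le K _
  have hap := EuclideanGeometry.dist_sq_add_dist_sq_eq_two_mul_dist_midpoint_sq_add_half_dist_sq
    a x y
  rw [dist_comm a x, dist_comm a y, dist_comm a] at hap
  have := chebyshevRadius_nonneg K
  nlinarith [dist_nonneg (x := x) (y := a), dist_nonneg (x := y) (y := a)]

theorem eq_chebyshevCenter_of_forall_le {K : NonemptyCompacts E} {x : E}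
    (h : ∀ y, dist {x} K ≤ dist {y} K) : x = chebyshevCenter K := by
  have := sq_dist_le_of_dist_singleton_le (h (chebyshevCenter K)) le_rfl
  rw [chebyshevRadius, sub_self, mul_zero] at this
  exact dist_le_zero.1 (by nlinarith [dist_nonneg (x := x) (y := chebyshevCenter K)])

theorem sq_dist_chebyshevCenter_le (K L : NonemptyCompacts E) :
    dist (chebyshevCenter K) (chebyshevCenter L) ^ 2 ≤
      16 * dist K L * (chebyshevRadius K + dist K L) := by
  have hcK : dist {chebyshevCenter K} L ≤ chebyshevRadius K + dist K L :=
    dist_triangle _ _ _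
  have hRL : chebyshevRadius L ≤ chebyshevRadius K + dist K L :=
    dist_comm L K ▸ chebyshevRadius_le_add_dist L K
  have hRK := chebyshevRadius_le_add_dist K L
  have key := sq_dist_le_of_dist_singleton_le hcK hRL
  have := chebyshevRadius_nonneg L
  have : 0 ≤ dist K L := dist_nonneg
  nlinarith

theorem continuous_chebyshevCenter :
    Continuous (chebyshevCenter : NonemptyCompacts E → E) := by
  refine continuous_iff_continuousAt.2 fun K => tendsto_iff_dist_tendsto_zero.2 ?_
  have hbound : Tendsto (fun L => √(16 * dist K L * (chebyshevRadius K + dist K L)))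
      (𝓝 K) (𝓝 0) := by
    have : Continuous fun L => √(16 * dist K L * (chebyshevRadius K + dist K L)) := by
      fun_prop
    simpa using this.tendsto K
  refine squeeze_zero (fun _ => dist_nonneg) (fun L => ?_) hbound
  rw [dist_comm]
  exact (le_abs_self _).trans (Real.abs_le_sqrt (sq_dist_chebyshevCenter_le K L))

theorem chebyshevCenter_of_image {g : E → E} {r : ℝ} (hr : 0 < r)
    (hg : ∀ x y, dist (g x) (g y) = r * dist x y) (hsurj : Function.Surjective g)
    {K L : NonemptyCompacts E} (hL : (L : Set E) = g '' K) :
    chebyshevCenter L = g (chebyshevCenter K) := by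
  refine (eq_chebyshevCenter_of_forall_le fun z => ?_).symm
  obtain ⟨w, rfl⟩ := hsurj z
  rw [dist_singleton_of_image hr.le hg hL, dist_singleton_of_image hr.le hg hL]
  exact mul_le_mul_of_nonneg_left (chebyshevRadius_le K w) hr.le

theorem chebyshevRadius_of_image {g : E → E} {r : ℝ} (hr : 0 < r)
    (hg : ∀ x y, dist (g x) (g y) = r * dist x y) (hsurj : Function.Surjective g)
    {K L : NonemptyCompacts E} (hL : (L : Set E) = g '' K) :
    chebyshevRadius L = r * chebyshevRadius K := by
  rw [chebyshevRadius, chebyshevCenter_of_image hr hg hsurj hL,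
    dist_singleton_of_image hr.le hg hL, chebyshevRadius]

end Chebyshev

section UnitaryAction

variable {E : Type*} [NormedAddCommGroup E] [InnerProductSpace ℝ E] [CompleteSpace E]

noncomputable instance : MulAction (unitary (E →L[ℝ] E)) (NonemptyCompacts E) where
  smul σ K := K.map (σ • ·) (σ : E →L[ℝ] E).continuous
  one_smul K := NonemptyCompacts.ext <| by
    change (fun x => (1 : unitary (E →L[ℝ] E)) • x) '' (K : Set E) = K
    simp
  mul_smul σ τ K := NonemptyCompacts.ext <| by
    change (fun x => (σ * τ) • x) '' (K : Set E) = (σ • ·) '' ((τ • ·) '' (K : Set E))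
    simp only [image_image, mul_smul]

theorem coe_unitary_smul (σ : unitary (E →L[ℝ] E)) (K : NonemptyCompacts E) :
    ((σ • K : NonemptyCompacts E) : Set E) = (σ • ·) '' K :=
  rfl

theorem isometry_unitary_smul (σ : unitary (E →L[ℝ] E)) :
    Isometry (σ • · : NonemptyCompacts E → NonemptyCompacts E) := fun _ _ =>
  hausdorffEDist_image (Unitary.linearIsometryEquiv σ).isometry

theorem dist_unitary_smul_le (σ τ : unitary (E →L[ℝ] E)) (K : NonemptyCompacts E) :
    dist (σ • K) (τ • K) ≤ dist σ τ * dist {0} K :=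
  dist_map_map_le _ _ K fun x hx => by
    rw [dist_eq_norm, Subtype.dist_eq, dist_eq_norm]
    exact ((σ - τ : E →L[ℝ] E).le_opNorm x).trans
      (mul_le_mul_of_nonneg_left (dist_zero_left x ▸ dist_le_dist_singleton hx 0) (norm_nonneg _))

theorem continuous_unitary_smul_const (K : NonemptyCompacts E) :
    Continuous fun σ : unitary (E →L[ℝ] E) => σ • K :=
  LipschitzWith.continuous (K := ⟨dist {0} K, dist_nonneg⟩) <|
    .of_dist_le_mul fun σ τ => (dist_unitary_smul_le σ τ K).trans_eq (mul_comm _ _)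

def fixedSubspace (N : NonemptyCompacts E) : Submodule ℝ E where
  carrier := {w | ∀ σ : unitary (E →L[ℝ] E), σ • N = N → σ • w = w}
  add_mem' hv hw σ hσ := by rw [smul_add, hv σ hσ, hw σ hσ]
  zero_mem' σ _ := smul_zero σ
  smul_mem' c w hw σ hσ := by rw [smul_comm, hw σ hσ]

end UnitaryAction

section OrbitWeight

variable {E : Type*} [NormedAddCommGroup E] [InnerProductSpace ℝ E] [CompleteSpace E]
  (N : NonemptyCompacts E) (a : ℝ)

noncomputable def orbitWeight (X : NonemptyCompacts E) (σ : unitary (E →L[ℝ] E)) : ℝ :=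
  max (a - dist (σ⁻¹ • X) N) 0

theorem orbitWeight_nonneg (X : NonemptyCompacts E) (σ : unitary (E →L[ℝ] E)) :
    0 ≤ orbitWeight N a X σ :=
  le_max_right _ _

theorem continuous_orbitWeight (X : NonemptyCompacts E) : Continuous (orbitWeight N a X) :=
  (continuous_const.sub (((continuous_unitary_smul_const X).comp continuous_inv).dist
    continuous_const)).max continuous_const

theorem continuous_orbitWeight_apply (σ : unitary (E →L[ℝ] E)) :
    Continuous fun X => orbitWeight N a X σ :=
  (continuous_const.sub ((isometry_unitary_smul σ⁻¹).continuous.dist continuous_const)).max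
    continuous_const

theorem orbitWeight_mul (τ σ : unitary (E →L[ℝ] E)) (X : NonemptyCompacts E) :
    orbitWeight N a (τ • X) (τ * σ) = orbitWeight N a X σ := by
  simp [orbitWeight, mul_smul]

end OrbitWeight

section Average

variable {E : Type*} [NormedAddCommGroup E] [InnerProductSpace ℝ E] [FiniteDimensional ℝ E]
  (N : NonemptyCompacts E) (a : ℝ)

noncomputable def orbitAverage (X : NonemptyCompacts E) : E →L[ℝ] E :=
  ∫ σ, orbitWeight N a X σ • (σ : E →L[ℝ] E) ∂Measure.haar

theorem integrable_orbitWeight_smul (X : NonemptyCompacts E) :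
    Integrable (fun σ => orbitWeight N a X σ • (σ : E →L[ℝ] E)) Measure.haar :=
  ((continuous_orbitWeight N a X).smul continuous_subtype_val).integrable_of_hasCompactSupport
    (.of_compactSpace _)

theorem orbitAverage_unitary_smul (τ : unitary (E →L[ℝ] E)) (X : NonemptyCompacts E) :
    orbitAverage N a (τ • X) = τ * orbitAverage N a X := by
  rw [orbitAverage, ← integral_mul_left_eq_self _ τ]
  simp only [orbitWeight_mul, Submonoid.coe_mul, ← mul_smul_comm]
  exact integral_const_mul_of_integrable (integrable_orbitWeight_smul N a X)

theorem continuous_orbitAverage : Continuous (orbitAverage N a) := by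
  refine continuous_of_dominated (bound := fun _ => max a 0)
    (fun X => ((continuous_orbitWeight N a X).smul continuous_subtype_val).aestronglyMeasurable)
    (fun X => ae_of_all _ fun σ => ?_) (integrable_const _)
    (ae_of_all _ fun σ => (continuous_orbitWeight_apply N a σ).smul continuous_const)
  rw [norm_smul, Real.norm_of_nonneg (orbitWeight_nonneg N a X σ)]
  exact (mul_le_of_le_one_right (orbitWeight_nonneg N a X σ) (Unitary.norm_le_one σ)).trans
    (max_le_max (sub_le_self a dist_nonneg) le_rfl)

theorem orbitAverage_apply (X : NonemptyCompacts E) (p : E) :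
    orbitAverage N a X p = ∫ σ, orbitWeight N a X σ • σ • p ∂Measure.haar :=
  ContinuousLinearMap.integral_apply (integrable_orbitWeight_smul N a X) p

theorem orbitAverage_eq_zero {X : NonemptyCompacts E}
    (h : ∀ σ : unitary (E →L[ℝ] E), a ≤ dist (σ • X) N) : orbitAverage N a X = 0 := by
  have hw : ∀ σ, orbitWeight N a X σ = 0 := fun σ => max_eq_right (sub_nonpos.2 (h σ⁻¹))
  simp [orbitAverage, hw]

theorem orbitAverage_self_apply_mem (p : E) : orbitAverage N a N p ∈ fixedSubspace N :=
  fun σ hσ => by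
    change ((σ : E →L[ℝ] E) * orbitAverage N a N) p = _
    rw [← orbitAverage_unitary_smul, hσ]

theorem integral_orbitWeight_self_pos (ha : 0 < a) :
    0 < ∫ σ, orbitWeight N a N σ ∂Measure.haar :=
  (continuous_orbitWeight N a N).integral_pos_of_hasCompactSupport_nonneg_nonzero
    (.of_compactSpace _) (fun _ => le_max_right _ _) (x := 1) (by simpa [orbitWeight] using ha)

theorem norm_orbitAverage_self_sub_le
    (hN : ∀ σ : unitary (E →L[ℝ] E), dist (σ⁻¹ • N) N < a →
      ∀ w ∈ fixedSubspace N, ‖σ • w - w‖ ≤ 2⁻¹ * ‖w‖)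
    {w : E} (hw : w ∈ fixedSubspace N) :
    ‖orbitAverage N a N w - (∫ σ, orbitWeight N a N σ ∂Measure.haar) • w‖ ≤
      (∫ σ, orbitWeight N a N σ ∂Measure.haar) * (2⁻¹ * ‖w‖) := by
  have hint := (continuous_orbitWeight N a N).integrable_of_hasCompactSupport
    (μ := Measure.haar) (.of_compactSpace _)
  rw [orbitAverage_apply, ← integral_smul_const, ← integral_sub _ (hint.smul_const w),
    ← integral_mul_const]
  · refine norm_integral_le_of_norm_le (hint.mul_const _) (ae_of_all _ fun σ => ?_)
    rw [← smul_sub, norm_smul, Real.norm_of_nonneg (orbitWeight_nonneg N a N σ)]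
    by_cases hσ : dist (σ⁻¹ • N) N < a
    · exact mul_le_mul_of_nonneg_left (hN σ hσ w hw) (le_max_right _ _)
    · simp [orbitWeight, not_lt.1 hσ]
  · exact (integrable_orbitWeight_smul N a N).apply_continuousLinearMap w

end Average

section Extension

variable {E : Type*} [NormedAddCommGroup E] [InnerProductSpace ℝ E] [FiniteDimensional ℝ E]

theorem exists_pos_forall_norm_unitary_smul_sub_le (N : NonemptyCompacts E) :
    ∃ a > 0, ∀ σ : unitary (E →L[ℝ] E), dist (σ⁻¹ • N) N < a →
      ∀ w ∈ fixedSubspace N, ‖σ • w - w‖ ≤ 2⁻¹ * ‖w‖ := by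
  -- `m σ` is how far `σ` moves unit vectors fixed by the stabilizer of `N`. Where `m σ ≥ 1/2`,
  -- a compact set missing the stabilizer, `σ⁻¹ • N` stays a positive distance away from `N`.
  set m : unitary (E →L[ℝ] E) → ℝ :=
    fun σ => ‖((σ : E →L[ℝ] E) - 1).comp (fixedSubspace N).subtypeL‖
  have hm : Continuous m :=
    ((continuous_subtype_val.sub continuous_const).clm_comp
      (continuous_const (y := (fixedSubspace N).subtypeL))).norm
  have hpos : ∀ σ ∈ {σ | 2⁻¹ ≤ m σ}, 0 < dist (σ⁻¹ • N) N := by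
    intro σ hσ
    refine dist_pos.2 fun hfix => ?_
    have hm0 : m σ = 0 := by
      refine (ContinuousLinearMap.opNorm_zero_iff _).2 (ContinuousLinearMap.ext fun w => ?_)
      exact sub_eq_zero.2 (w.2 σ (by rw [inv_smul_eq_iff] at hfix; exact hfix.symm))
    exact absurd (hm0 ▸ hσ.out) (by norm_num)
  obtain ⟨a, ha, haC⟩ := (isClosed_le continuous_const hm).isCompact.exists_forall_le'
    (((continuous_unitary_smul_const N).comp continuous_inv).dist continuous_const).continuousOn
    hpos
  refine ⟨a, ha, fun σ hσ w hw => ?_⟩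
  have hmσ : m σ < 2⁻¹ := not_le.1 fun h => (haC σ h).not_gt hσ
  calc ‖σ • w - w‖ = ‖(((σ : E →L[ℝ] E) - 1).comp (fixedSubspace N).subtypeL) ⟨w, hw⟩‖ := rfl
    _ ≤ m σ * ‖w‖ := ContinuousLinearMap.le_opNorm _ _
    _ ≤ 2⁻¹ * ‖w‖ := mul_le_mul_of_nonneg_right hmσ.le (norm_nonneg _)

theorem exists_pos_forall_le_dist_unitary_smul {ι : Type*} [Finite ι]
    (N : ι → NonemptyCompacts E) (X : NonemptyCompacts E)
    (h : ∀ i (σ : unitary (E →L[ℝ] E)), σ • N i ≠ X) :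
    ∃ a > 0, ∀ i (σ : unitary (E →L[ℝ] E)), a ≤ dist (σ • N i) X := by
  have hS : IsCompact (⋃ i, range fun σ : unitary (E →L[ℝ] E) => σ • N i) :=
    isCompact_iUnion fun i => isCompact_range (continuous_unitary_smul_const (N i))
  obtain ⟨a, ha, haS⟩ := hS.exists_forall_le' (continuous_id.dist continuous_const).continuousOn
    (a := 0) (by
      simp only [mem_iUnion, mem_range, forall_exists_index]
      rintro _ i σ rfl
      exact dist_pos.2 (h i σ))
  exact ⟨a, ha, fun i σ => haS _ (mem_iUnion.2 ⟨i, σ, rfl⟩)⟩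

theorem exists_orbitAverage_self_apply_eq {N : NonemptyCompacts E} {a : ℝ} (ha : 0 < a)
    (hN : ∀ σ : unitary (E →L[ℝ] E), dist (σ⁻¹ • N) N < a →
      ∀ w ∈ fixedSubspace N, ‖σ • w - w‖ ≤ 2⁻¹ * ‖w‖)
    {v : E} (hv : v ∈ fixedSubspace N) : ∃ p, orbitAverage N a N p = v := by
  -- on `fixedSubspace N`, `orbitAverage N a N` is within half of `D • id` with `D > 0`
  have hD := integral_orbitWeight_self_pos N a ha
  let T : fixedSubspace N →ₗ[ℝ] fixedSubspace N :=
    (orbitAverage N a N : E →ₗ[ℝ] E).restrict fun p _ => orbitAverage_self_apply_mem N a p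
  have hT : Function.Injective T := by
    refine (injective_iff_map_eq_zero T).2 fun w hw => ?_
    have h := norm_orbitAverage_self_sub_le N a hN w.2
    rw [show orbitAverage N a N w = 0 from congrArg Subtype.val hw, zero_sub, norm_neg,
      norm_smul, Real.norm_of_nonneg hD.le] at h
    have : ‖(w : E)‖ = 0 := by nlinarith [norm_nonneg (w : E)]
    exact Subtype.ext (norm_eq_zero.1 this)
  obtain ⟨p, hp⟩ := LinearMap.injective_iff_surjective.1 hT ⟨v, hv⟩
  exact ⟨p, congrArg Subtype.val hp⟩

theorem exists_orbitAverage_eq_single {ι : Type*} [Finite ι] {N : ι → NonemptyCompacts E}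
    (hN : ∀ i j (σ : unitary (E →L[ℝ] E)), σ • N i = N j → i = j) (i : ι) {v : E}
    (hv : v ∈ fixedSubspace (N i)) :
    ∃ a p, orbitAverage (N i) a (N i) p = v ∧ ∀ j ≠ i, orbitAverage (N i) a (N j) = 0 := by
  obtain ⟨a₁, ha₁, hfix⟩ := exists_pos_forall_norm_unitary_smul_sub_le (N i)
  obtain ⟨a₂, ha₂, hsep⟩ := exists_pos_forall_le_dist_unitary_smul
    (fun j : {j // j ≠ i} => N j) (N i) fun j σ h => j.2 (hN _ _ σ h)
  obtain ⟨p, hp⟩ := exists_orbitAverage_self_apply_eq (lt_min ha₁ ha₂)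
    (fun σ hσ => hfix σ (hσ.trans_le (min_le_left _ _))) hv
  exact ⟨min a₁ a₂, p, hp, fun j hj =>
    orbitAverage_eq_zero _ _ fun σ => (min_le_right _ _).trans (hsep ⟨j, hj⟩ σ)⟩

theorem exists_continuous_unitary_equivariant {ι : Type*} [Fintype ι]
    {N : ι → NonemptyCompacts E} (hN : ∀ i j (σ : unitary (E →L[ℝ] E)), σ • N i = N j → i = j)
    {v : ι → E} (hv : ∀ i, v i ∈ fixedSubspace (N i)) :
    ∃ Φ : NonemptyCompacts E → E, Continuous Φ ∧
      (∀ (σ : unitary (E →L[ℝ] E)) X, Φ (σ • X) = σ • Φ X) ∧ ∀ i, Φ (N i) = v i := by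
  choose a p hp hzero using fun i => exists_orbitAverage_eq_single hN i (hv i)
  refine ⟨fun X => ∑ i, orbitAverage (N i) (a i) X (p i), ?_, fun σ X => ?_, fun i => ?_⟩
  · exact continuous_finsetSum _ fun i _ =>
      (continuous_orbitAverage _ _).clm_apply continuous_const
  · simp only [orbitAverage_unitary_smul, mul_apply_eq_comp, Finset.smul_sum]
    rfl
  · change ∑ j, orbitAverage (N j) (a j) (N i) (p j) = v i
    rw [Finset.sum_eq_single i (fun j _ hj => by rw [hzero j i hj.symm]; rfl)
      (fun h => absurd (Finset.mem_univ i) h)]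
    exact hp i

end Extension

section Normalize

variable {E : Type*} [NormedAddCommGroup E] [InnerProductSpace ℝ E] [ProperSpace E]

noncomputable def normalize (K : NonemptyCompacts E) : NonemptyCompacts E :=
  K.map (fun x => (chebyshevRadius K)⁻¹ • (x - chebyshevCenter K)) (by fun_prop)

theorem image_normalize {K : NonemptyCompacts E} (hK : chebyshevRadius K ≠ 0) :
    (fun y => chebyshevCenter K + chebyshevRadius K • y) '' normalize K = K := by
  rw [normalize, coe_map, image_image]
  simp [smul_inv_smul₀ hK]

theorem dist_normalize_le (K K₀ : NonemptyCompacts E) :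
    dist (normalize K) (normalize K₀) ≤
      |(chebyshevRadius K)⁻¹| * dist K K₀ +
        (|(chebyshevRadius K)⁻¹ - (chebyshevRadius K₀)⁻¹| * chebyshevRadius K₀ +
          |(chebyshevRadius K)⁻¹| * ‖chebyshevCenter K₀ - chebyshevCenter K‖) := by
  set s := (chebyshevRadius K)⁻¹
  set s₀ := (chebyshevRadius K₀)⁻¹
  set c := chebyshevCenter K
  set c₀ := chebyshevCenter K₀
  have hf : LipschitzWith ‖s‖₊ fun x : E => s • (x - c) :=
    LipschitzWith.of_dist_le_mul fun x y => by rw [dist_smul₀, dist_sub_right]; rfl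
  refine (dist_triangle _ (K₀.map _ hf.continuous) _).trans (add_le_add ?_ ?_)
  · exact dist_map_le_mul hf K K₀
  · refine dist_map_map_le _ _ K₀ fun x hx => ?_
    rw [dist_eq_norm, show s • (x - c) - s₀ • (x - c₀) = (s - s₀) • (x - c₀) + s • (c₀ - c) by
      module]
    refine (norm_add_le _ _).trans (add_le_add ?_ (norm_smul _ _).le)
    rw [norm_smul, Real.norm_eq_abs, ← dist_eq_norm, dist_comm]
    exact mul_le_mul_of_nonneg_left (dist_le_dist_singleton hx c₀) (abs_nonneg _)

theorem continuousOn_normalize :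
    ContinuousOn (normalize : NonemptyCompacts E → _) {K | chebyshevRadius K ≠ 0} := by
  intro K₀ hK₀
  have hs : ContinuousAt (fun K : NonemptyCompacts E => (chebyshevRadius K)⁻¹) K₀ :=
    lipschitzWith_chebyshevRadius.continuous.continuousAt.inv₀ hK₀
  have hc := continuous_chebyshevCenter (E := E)
  have hbound : Tendsto (fun K => |(chebyshevRadius K)⁻¹| * dist K K₀ +
      (|(chebyshevRadius K)⁻¹ - (chebyshevRadius K₀)⁻¹| * chebyshevRadius K₀ +
        |(chebyshevRadius K)⁻¹| * ‖chebyshevCenter K₀ - chebyshevCenter K‖)) (𝓝 K₀) (𝓝 0) := by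
    have : ContinuousAt (fun K => |(chebyshevRadius K)⁻¹| * dist K K₀ +
        (|(chebyshevRadius K)⁻¹ - (chebyshevRadius K₀)⁻¹| * chebyshevRadius K₀ +
          |(chebyshevRadius K)⁻¹| * ‖chebyshevCenter K₀ - chebyshevCenter K‖)) K₀ := by
      fun_prop
    simpa using this.tendsto
  exact (tendsto_iff_dist_tendsto_zero.2 (squeeze_zero (fun _ => dist_nonneg)
    (fun K => dist_normalize_le K K₀) hbound)).mono_left nhdsWithin_le_nhds

end Normalize

section Similarity

open AffineEquiv

variable {E : Type*} [NormedAddCommGroup E] [InnerProductSpace ℝ E] [FiniteDimensional ℝ E]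

theorem normalize_of_image (g : E ≃ᵃ[ℝ] E) {r : ℝ} (hr : 0 < r)
    (hg : ∀ x y, dist (g x) (g y) = r * dist x y) {K L : NonemptyCompacts E}
    (hL : (L : Set E) = g '' K) : normalize L = rotationPart g hr hg • normalize K := by
  refine NonemptyCompacts.ext ?_
  rw [coe_unitary_smul, normalize, normalize, coe_map, coe_map, hL, image_image, image_image,
    chebyshevCenter_of_image hr hg g.surjective hL, chebyshevRadius_of_image hr hg g.surjective hL]
  refine image_congr fun x _ => ?_
  rw [rotationPart_smul, map_smul, ← map_sub_map_eq_linear, smul_smul, mul_inv]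

theorem image_similarity_normalize {K L : NonemptyCompacts E} (hK : chebyshevRadius K ≠ 0)
    (hL : chebyshevRadius L ≠ 0) {σ : unitary (E →L[ℝ] E)} (h : σ • normalize K = normalize L) :
    similarity σ (chebyshevCenter K) (chebyshevCenter L) (div_ne_zero hL hK) '' K = L := by
  rw [← image_normalize hL, ← h, coe_unitary_smul, normalize, coe_map, image_image, image_image]
  refine image_congr fun x _ => ?_
  rw [similarity_apply, smul_comm σ, smul_smul, div_eq_mul_inv]

theorem smul_mem_fixedSubspace_normalize {K : NonemptyCompacts E} (hK : chebyshevRadius K ≠ 0)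
    {y : E} (h : ∀ g : E ≃ᵃ[ℝ] E, (∃ r, 0 < r ∧ ∀ x y, dist (g x) (g y) = r * dist x y) →
      g '' K = K → g y = y) :
    (chebyshevRadius K)⁻¹ • (y - chebyshevCenter K) ∈ fixedSubspace (normalize K) := by
  intro σ hσ
  have hy := h _ (exists_dist_similarity σ _ _ (div_ne_zero hK hK))
    (image_similarity_normalize hK hK hσ)
  rw [similarity_apply, div_self hK, one_smul, ← eq_sub_iff_add_eq'] at hy
  rw [smul_comm σ, hy]

theorem exists_similarity_image_eq {K L : NonemptyCompacts E} (hK : chebyshevRadius K ≠ 0)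
    (hL : chebyshevRadius L ≠ 0) {σ : unitary (E →L[ℝ] E)} (h : σ • normalize K = normalize L) :
    ∃ g : E ≃ᵃ[ℝ] E, (∃ r, 0 < r ∧ ∀ x y, dist (g x) (g y) = r * dist x y) ∧ g '' K = L :=
  ⟨_, exists_dist_similarity σ _ _ (div_ne_zero hL hK), image_similarity_normalize hK hL h⟩

noncomputable def liftNormalized (Φ : NonemptyCompacts E → E) (K : NonemptyCompacts E) : E :=
  chebyshevCenter K + chebyshevRadius K • Φ (normalize K)

theorem continuousOn_liftNormalized {Φ : NonemptyCompacts E → E} (hΦ : Continuous Φ) :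
    ContinuousOn (liftNormalized Φ) {K | chebyshevRadius K ≠ 0} :=
  continuous_chebyshevCenter.continuousOn.add
    (lipschitzWith_chebyshevRadius.continuous.continuousOn.smul
      (hΦ.comp_continuousOn continuousOn_normalize))

theorem liftNormalized_of_image {Φ : NonemptyCompacts E → E}
    (hΦ : ∀ (σ : unitary (E →L[ℝ] E)) X, Φ (σ • X) = σ • Φ X) (g : E ≃ᵃ[ℝ] E) {r : ℝ}
    (hr : 0 < r) (hg : ∀ x y, dist (g x) (g y) = r * dist x y) {K L : NonemptyCompacts E}
    (hL : (L : Set E) = g '' K) : liftNormalized Φ L = g (liftNormalized Φ K) := by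
  rw [liftNormalized, liftNormalized, chebyshevCenter_of_image hr hg g.surjective hL,
    chebyshevRadius_of_image hr hg g.surjective hL, normalize_of_image g hr hg hL, hΦ,
    rotationPart_smul, smul_smul, mul_comm r, mul_assoc, mul_inv_cancel₀ hr.ne', mul_one,
    map_add_eq_add_linear, map_smul]

end Similarity

end TopologicalSpace.NonemptyCompacts

open NonemptyCompacts

theorem statement17_general (n i : ℕ) (hi : 1 ≤ i) (m : ℕ)
    (K : Fin m → Kplus n i) (y : Fin m → Euc n)
    (hstab : ∀ j, ∀ g ∈ Sim n,
      ⇑g '' ((K j).1 : Set (Euc n)) = ((K j).1 : Set (Euc n)) → g (y j) = y j)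
    (horb : ∀ j k, j ≠ k →
      ¬ ∃ g ∈ Sim n, ⇑g '' ((K j).1 : Set (Euc n)) = ((K k).1 : Set (Euc n))) :
    ∃ ψ : Kplus n i → Euc n, Continuous ψ ∧
      (∀ g ∈ Sim n, ∀ A B : Kplus n i,
        (B.1 : Set (Euc n)) = ⇑g '' (A.1 : Set (Euc n)) → ψ B = g (ψ A)) ∧
      ∀ j, ψ (K j) = y j := by
  let B : Kplus n i → NonemptyCompacts (Euc n) := fun A => A.1.toNonemptyCompacts
  have hR : ∀ A, chebyshevRadius (B A) ≠ 0 := fun A =>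
    chebyshevRadius_ne_zero (Set.nontrivial_of_one_le_finrank_direction (hi.trans A.2))
  obtain ⟨Φ, hΦ, hΦσ, hΦK⟩ := exists_continuous_unitary_equivariant
    (N := fun j => normalize (B (K j)))
    (fun j k σ h => by_contra fun hjk => horb j k hjk (exists_similarity_image_eq (hR _) (hR _) h))
    (v := fun j => (chebyshevRadius (B (K j)))⁻¹ • (y j - chebyshevCenter (B (K j))))
    (fun j => smul_mem_fixedSubspace_normalize (hR _) (hstab j))
  refine ⟨fun A => liftNormalized Φ (B A), ?_, ?_, fun j => ?_⟩
  · exact (continuousOn_liftNormalized hΦ).comp_continuous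
      (ConvexBody.isometry_toNonemptyCompacts.continuous.comp continuous_subtype_val) hR
  · rintro g ⟨r, hr, hg⟩ A A' hA
    exact liftNormalized_of_image hΦσ g hr hg hA
  · simp only [liftNormalized, hΦK, smul_inv_smul₀ (hR _), add_sub_cancel]

/-- For every `1 ≤ i ≤ n`, the pair `(𝒦ⁿ_{i⁺}, ℝⁿ)` has the `Sim(n)`-finite
extension property: for finite families `K₁,…,K_m ∈ 𝒦ⁿ_{i⁺}` and `y₁,…,y_m ∈ ℝⁿ` such that
the `Sim(n)`-stabilizer of each `K_j` is contained in that of `y_j`, and the `Sim(n)`-orbits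
of the `K_j` are pairwise disjoint, there is a continuous `Sim(n)`-equivariant map
`ψ : 𝒦ⁿ_{i⁺} → ℝⁿ` with `ψ K_j = y_j` for all `j`. -/
theorem statement17 (n i : ℕ) (hi : 1 ≤ i) (hin : i ≤ n) (m : ℕ)
    (K : Fin m → Kplus n i) (y : Fin m → Euc n)
    (hstab : ∀ j, ∀ g ∈ Sim n,
      ⇑g '' ((K j).1 : Set (Euc n)) = ((K j).1 : Set (Euc n)) → g (y j) = y j)
    (horb : ∀ j k, j ≠ k →
      ¬ ∃ g ∈ Sim n, ⇑g '' ((K j).1 : Set (Euc n)) = ((K k).1 : Set (Euc n))) :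
    ∃ ψ : Kplus n i → Euc n, Continuous ψ ∧
      (∀ g ∈ Sim n, ∀ A B : Kplus n i,
        (B.1 : Set (Euc n)) = ⇑g '' (A.1 : Set (Euc n)) → ψ B = g (ψ A)) ∧
      ∀ j, ψ (K j) = y j :=
  statement17_general n i hi m K y hstab horb
end
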